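/- arXiv:1809.00521 — 3 statements merged into one kernel-verified Lean document; each statement's English description precedes it below -/
import Mathlib

section
/- Let 𝔤 and 𝔥 be Lie algebras over a field k, with bilinear maps ▷ : 𝔥 × 𝔤 → 𝔤 and ◁ : 𝔥 × 𝔤 → 𝔥 such that ▷ is a Lie algebra action of 𝔥 on the vector space 𝔤, ◁ is a right Lie algebra action of 𝔤 on the vector space 𝔥, and the matched pair conditions η ▷ [ξ₁,ξ₂] = [η ▷ ξ₁, ξ₂] + [ξ₁, η ▷ ξ₂] + (η ◁ ξ₁) ▷ ξ₂ − (η ◁ ξ₂) ▷ ξ₁ and [η₁,η₂] ◁ ξ = [η₁, η₂ ◁ ξ] + [η₁ ◁ ξ, η₂] + η₁ ◁ (η₂ ▷ ξ) − η₂ ◁ (η₁ ▷ ξ) hold. Then the bracket [(ξ₁,η₁),(ξ₂,η₂)] = ([ξ₁,ξ₂] + η₁ ▷ ξ₂ − η₂ ▷ ξ₁, [η₁,η₂] + η₁ ◁ ξ₂ − η₂ ◁ ξ₁) makes 𝔤 ⊕ 𝔥 a Lie algebra. -/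
set_option maxHeartbeats 1600000 in
theorem stmt_6 {k : Type*} [Field k] {g h : Type*}
    [LieRing g] [LieAlgebra k g] [LieRing h] [LieAlgebra k h]
    (act : h →ₗ[k] g →ₗ[k] g) (ract : h →ₗ[k] g →ₗ[k] h)
    (hact : ∀ (η₁ η₂ : h) (ξ : g),
      act ⁅η₁, η₂⁆ ξ = act η₁ (act η₂ ξ) - act η₂ (act η₁ ξ))
    (hract : ∀ (η : h) (ξ₁ ξ₂ : g),
      ract η ⁅ξ₁, ξ₂⁆ = ract (ract η ξ₁) ξ₂ - ract (ract η ξ₂) ξ₁)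
    (hc₁ : ∀ (η : h) (ξ₁ ξ₂ : g),
      act η ⁅ξ₁, ξ₂⁆ =
        ⁅act η ξ₁, ξ₂⁆ + ⁅ξ₁, act η ξ₂⁆ + act (ract η ξ₁) ξ₂ - act (ract η ξ₂) ξ₁)
    (hc₂ : ∀ (η₁ η₂ : h) (ξ : g),
      ract ⁅η₁, η₂⁆ ξ =
        ⁅η₁, ract η₂ ξ⁆ + ⁅ract η₁ ξ, η₂⁆ + ract η₁ (act η₂ ξ) - ract η₂ (act η₁ ξ)) :
    let B : (g × h) → (g × h) → (g × h) := fun p q =>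
      (⁅p.1, q.1⁆ + act p.2 q.1 - act q.2 p.1, ⁅p.2, q.2⁆ + ract p.2 q.1 - ract q.2 p.1)
    (∀ p q r : g × h, B (p + q) r = B p r + B q r) ∧
    (∀ p q r : g × h, B p (q + r) = B p q + B p r) ∧
    (∀ (c : k) (p q : g × h), B (c • p) q = c • B p q) ∧
    (∀ (c : k) (p q : g × h), B p (c • q) = c • B p q) ∧
    (∀ p : g × h, B p p = 0) ∧
    (∀ p q r : g × h, B p (B q r) = B (B p q) r + B q (B p r)) := by
  intro B
  refine ⟨?_, ?_, ?_, ?_, ?_, ?_⟩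
  · intro p q r
    simp only [B, Prod.fst_add, Prod.snd_add, map_add, LinearMap.add_apply, add_lie,
      Prod.mk_add_mk, Prod.ext_iff]
    constructor <;> abel
  · intro p q r
    simp only [B, Prod.fst_add, Prod.snd_add, map_add, LinearMap.add_apply, lie_add,
      Prod.mk_add_mk, Prod.ext_iff]
    constructor <;> abel
  · intro c p q
    simp only [B, Prod.smul_fst, Prod.smul_snd, map_smul, LinearMap.smul_apply, smul_lie,
      Prod.smul_mk, smul_add, smul_sub]
  · intro c p q
    simp only [B, Prod.smul_fst, Prod.smul_snd, map_smul, LinearMap.smul_apply, lie_smul,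
      Prod.smul_mk, smul_add, smul_sub]
  · intro p
    simp [B]
  · intro p q r
    obtain ⟨x, a⟩ := p; obtain ⟨y, b⟩ := q; obtain ⟨z, c⟩ := r
    simp only [B, Prod.mk_add_mk, Prod.ext_iff]
    constructor
    · simp only [map_add, map_sub, LinearMap.add_apply, LinearMap.sub_apply,
        lie_add, lie_sub, add_lie, sub_lie, hact, hract, hc₁, hc₂]
      rw [leibniz_lie x y z, ← lie_skew (act c x) y]
      abel
    · simp only [map_add, map_sub, LinearMap.add_apply, LinearMap.sub_apply,
        lie_add, lie_sub, add_lie, sub_lie, hact, hract, hc₁, hc₂]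
      rw [leibniz_lie a b c, ← lie_skew b (ract a z)]
      abel
end

section
/- Let G be a group acting on a set M on the right. The map Φ : M × G × M → (M × G) ⋈ (M × M), (m, g, n) ↦ (m, g; m·g, n) is an isomorphism of groupoids from the trivial groupoid M × G × M onto the matched pair groupoid of the action groupoid M × G and the pair groupoid M × M; in particular Φ((m,g,n)·(n,g',n')) = Φ(m,g,n) ∗ Φ(n,g',n'), where the matched pair composition is (m,g;m·g,m') ∗ (m',h;m'·h,n) = (m, gh; m·g·h, n). -/
/-- Matched pair composition on `(M × G) × (M × M)` obtained from the mutual actions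
`(m',m) ▷ (m,g) = (m',g)` and `(m',m) ◁ (m,g) = (m'·g, m·g)`:
`(x, y) ∗ (x', y') = (x · (y ▷ x'), (y ◁ x') · y')`. -/
def mpComp {M G : Type*} [Group G] (sm : M → G → M)
    (x y : (M × G) × (M × M)) : (M × G) × (M × M) :=
  ((x.1.1, x.1.2 * y.1.2), (sm x.2.1 y.1.2, y.2.2))

/-- The identification `Φ(m,g,n) = (m,g; m·g,n)` of the trivial groupoid with the
matched pair groupoid. -/
def trivPhi {M G : Type*} [Group G] (sm : M → G → M)
    (t : M × G × M) : (M × G) × (M × M) :=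
  ((t.1, t.2.1), (sm t.1 t.2.1, t.2.2))

theorem stmt_12 {M G : Type*} [Group G] (sm : M → G → M)
    (h_one : ∀ m, sm m 1 = m)
    (h_mul : ∀ m g g', sm (sm m g) g' = sm m (g * g')) :
    -- Φ is a bijection onto the underlying set of the matched pair groupoid
    Function.Bijective
      (fun t : M × G × M =>
        (⟨trivPhi sm t, rfl⟩ : {x : (M × G) × (M × M) // x.2.1 = sm x.1.1 x.1.2})) ∧
    -- Φ preserves identities
    (∀ m : M, trivPhi sm (m, 1, m) = ((m, 1), (m, m))) ∧
    -- Φ preserves composition: Φ((m,g,n)·(n,g',n')) = Φ(m,g,n) ∗ Φ(n,g',n')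
    (∀ (m n n' : M) (g g' : G),
      trivPhi sm (m, g * g', n') =
        mpComp sm (trivPhi sm (m, g, n)) (trivPhi sm (n, g', n'))) := by
  refine ⟨⟨?_, ?_⟩, ?_, ?_⟩
  · intro a b h
    obtain ⟨a1, a2, a3⟩ := a
    obtain ⟨b1, b2, b3⟩ := b
    have := congrArg Subtype.val h
    simp [trivPhi, Prod.ext_iff] at this
    simp [Prod.ext_iff, this.1.1, this.1.2, this.2.2]
  · rintro ⟨⟨⟨m, g⟩, ⟨p, n⟩⟩, hx⟩
    exact ⟨(m, g, n), by simp [trivPhi] at hx ⊢; exact hx.symm⟩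
  · intro m; simp [trivPhi, h_one]
  · intro m n n' g g'; simp [trivPhi, mpComp, h_mul]
end

section
/- Let (G, H) be a matched pair of groupoids over a base B. The set G ∗ H = {(g,h) : β(g) = α(h)} with partial multiplication (g,h)(g',h') = (g(h ▷ g'), (h ◁ g')h') (defined when β(h) = α(g')), source α(g,h) = α(g), target β(g,h) = β(h), and identities b ↦ (id_b, id_b), is a groupoid over B. -/
/-- A groupoid over a base `B` with arrow set `A`, presented by structure maps.
Composition `comp x y` is only meaningful when `t x = s y`. -/
structure PreGroupoid (B A : Type*) where
  s : A → B
  t : A → B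
  unit : B → A
  comp : A → A → A
  inv : A → A
  s_unit : ∀ b, s (unit b) = b
  t_unit : ∀ b, t (unit b) = b
  s_comp : ∀ x y, t x = s y → s (comp x y) = s x
  t_comp : ∀ x y, t x = s y → t (comp x y) = t y
  assoc : ∀ x y z, t x = s y → t y = s z → comp (comp x y) z = comp x (comp y z)
  unit_comp : ∀ x, comp (unit (s x)) x = x
  comp_unit : ∀ x, comp x (unit (t x)) = x
  s_inv : ∀ x, s (inv x) = t x
  t_inv : ∀ x, t (inv x) = s x
  inv_comp : ∀ x, comp (inv x) x = unit (t x)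
  comp_inv : ∀ x, comp x (inv x) = unit (s x)

/-- In a pre-groupoid, an idempotent loop is a unit. -/
theorem PreGroupoid.idem {B A : Type*} (P : PreGroupoid B A) (x : A)
    (hts : P.t x = P.s x) (hxx : P.comp x x = x) : x = P.unit (P.t x) := by
  have h1 : P.comp (P.unit (P.t x)) x = x := by
    have := P.unit_comp x
    rwa [← hts] at this
  have : P.unit (P.t x) = x := by
    calc P.unit (P.t x) = P.comp (P.inv x) x := (P.inv_comp x).symm
      _ = P.comp (P.inv x) (P.comp x x) := by rw [hxx]
      _ = P.comp (P.comp (P.inv x) x) x := (P.assoc _ _ _ (P.t_inv x) hts).symm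
      _ = P.comp (P.unit (P.t x)) x := by rw [P.inv_comp]
      _ = x := h1
  exact this.symm
theorem stmt_15 {B AG AH : Type*} (𝓖 : PreGroupoid B AG) (𝓗 : PreGroupoid B AH)
(lact : AH → AG → AG) (ract : AH → AG → AH)
    (h1 : ∀ h g, 𝓗.t h = 𝓖.s g → 𝓖.s (lact h g) = 𝓗.s h)
    (h2 : ∀ h' h g, 𝓗.t h' = 𝓗.s h → 𝓗.t h = 𝓖.s g →
      lact (𝓗.comp h' h) g = lact h' (lact h g))
    (h3 : ∀ g, lact (𝓗.unit (𝓖.s g)) g = g)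
    (h4 : ∀ h g, 𝓗.t h = 𝓖.s g → 𝓗.t (ract h g) = 𝓖.t g)
    (h5 : ∀ h g' g, 𝓗.t h = 𝓖.s g' → 𝓖.t g' = 𝓖.s g →
      ract h (𝓖.comp g' g) = ract (ract h g') g)
    (h6 : ∀ h, ract h (𝓖.unit (𝓗.t h)) = h)
    (h7 : ∀ h g, 𝓗.t h = 𝓖.s g → 𝓖.t (lact h g) = 𝓗.s (ract h g))
    (h8 : ∀ h g' g, 𝓗.t h = 𝓖.s g' → 𝓖.t g' = 𝓖.s g →
      lact h (𝓖.comp g' g) = 𝓖.comp (lact h g') (lact (ract h g') g))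
    (h9 : ∀ h' h g, 𝓗.t h' = 𝓗.s h → 𝓗.t h = 𝓖.s g →
      ract (𝓗.comp h' h) g = 𝓗.comp (ract h' (lact h g)) (ract h g)) :
    -- arrows of G ⋈ H are pairs with β(g) = α(h)
    let wf : AG × AH → Prop := fun p => 𝓖.t p.1 = 𝓗.s p.2
    let ms : AG × AH → B := fun p => 𝓖.s p.1
    let mt : AG × AH → B := fun p => 𝓗.t p.2
    let mid : B → AG × AH := fun b => (𝓖.unit b, 𝓗.unit b)
    let mcomp : AG × AH → AG × AH → AG × AH := fun p q =>
      (𝓖.comp p.1 (lact p.2 q.1), 𝓗.comp (ract p.2 q.1) q.2)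
    -- identities are arrows with the right source and target
    (∀ b, wf (mid b) ∧ ms (mid b) = b ∧ mt (mid b) = b) ∧
    -- composition of composable arrows is an arrow, with correct source and target
    (∀ p q, wf p → wf q → mt p = ms q →
      wf (mcomp p q) ∧ ms (mcomp p q) = ms p ∧ mt (mcomp p q) = mt q) ∧
    -- associativity
    (∀ p q r, wf p → wf q → wf r → mt p = ms q → mt q = ms r →
      mcomp (mcomp p q) r = mcomp p (mcomp q r)) ∧
    -- unit laws
    (∀ p, wf p → mcomp (mid (ms p)) p = p ∧ mcomp p (mid (mt p)) = p) ∧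
    -- inverses
    (∀ p, wf p → ∃ q, wf q ∧ ms q = mt p ∧ mt q = ms p ∧
      mcomp q p = mid (mt p) ∧ mcomp p q = mid (ms p)) := by
  -- derived facts: actions on units
  have L2 : ∀ g : AG, ract (𝓗.unit (𝓖.s g)) g = 𝓗.unit (𝓖.t g) := by
    intro g
    have hu_t : 𝓗.t (𝓗.unit (𝓖.s g)) = 𝓖.s g := 𝓗.t_unit _
    have huu : 𝓗.comp (𝓗.unit (𝓖.s g)) (𝓗.unit (𝓖.s g)) = 𝓗.unit (𝓖.s g) := by
      have := 𝓗.unit_comp (𝓗.unit (𝓖.s g))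
      rwa [𝓗.s_unit] at this
    have e := h9 (𝓗.unit (𝓖.s g)) (𝓗.unit (𝓖.s g)) g
      (by rw [𝓗.t_unit, 𝓗.s_unit]) hu_t
    rw [huu, h3 g] at e
    have hsx : 𝓖.t g = 𝓗.s (ract (𝓗.unit (𝓖.s g)) g) := by
      have := h7 (𝓗.unit (𝓖.s g)) g hu_t
      rwa [h3 g] at this
    have htx : 𝓗.t (ract (𝓗.unit (𝓖.s g)) g) = 𝓖.t g := h4 _ _ hu_t
    have := 𝓗.idem _ (htx.trans hsx) e.symm
    rw [htx] at this
    exact this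
  have L3 : ∀ h : AH, lact h (𝓖.unit (𝓗.t h)) = 𝓖.unit (𝓗.s h) := by
    intro h
    have ht : 𝓗.t h = 𝓖.s (𝓖.unit (𝓗.t h)) := (𝓖.s_unit _).symm
    have huu : 𝓖.comp (𝓖.unit (𝓗.t h)) (𝓖.unit (𝓗.t h)) = 𝓖.unit (𝓗.t h) := by
      have := 𝓖.unit_comp (𝓖.unit (𝓗.t h))
      rwa [𝓖.s_unit] at this
    have e := h8 h (𝓖.unit (𝓗.t h)) (𝓖.unit (𝓗.t h)) ht
      (by rw [𝓖.t_unit, 𝓖.s_unit])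
    rw [huu, h6 h] at e
    have hty : 𝓖.t (lact h (𝓖.unit (𝓗.t h))) = 𝓗.s h := by
      have := h7 h (𝓖.unit (𝓗.t h)) ht
      rwa [h6 h] at this
    have hsy : 𝓖.s (lact h (𝓖.unit (𝓗.t h))) = 𝓗.s h := h1 _ _ ht
    have := 𝓖.idem _ (hty.trans hsy.symm) e.symm
    rw [hty] at this
    exact this
  intro wf ms mt mid mcomp
  refine ⟨?_, ?_, ?_, ?_, ?_⟩
  · -- identities
    intro b
    refine ⟨?_, ?_, ?_⟩
    · show 𝓖.t (𝓖.unit b) = 𝓗.s (𝓗.unit b)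
      rw [𝓖.t_unit, 𝓗.s_unit]
    · exact 𝓖.s_unit b
    · exact 𝓗.t_unit b
  · -- composition well-formed
    intro p q hp hq hpq
    replace hp : 𝓖.t p.1 = 𝓗.s p.2 := hp
    replace hq : 𝓖.t q.1 = 𝓗.s q.2 := hq
    replace hpq : 𝓗.t p.2 = 𝓖.s q.1 := hpq
    have c1 : 𝓖.t p.1 = 𝓖.s (lact p.2 q.1) := hp.trans (h1 _ _ hpq).symm
    have c2 : 𝓗.t (ract p.2 q.1) = 𝓗.s q.2 := (h4 _ _ hpq).trans hq
    refine ⟨?_, ?_, ?_⟩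
    · show 𝓖.t (𝓖.comp p.1 (lact p.2 q.1)) = 𝓗.s (𝓗.comp (ract p.2 q.1) q.2)
      rw [𝓖.t_comp _ _ c1, 𝓗.s_comp _ _ c2]
      exact h7 _ _ hpq
    · exact 𝓖.s_comp _ _ c1
    · exact 𝓗.t_comp _ _ c2
  · -- associativity
    rintro ⟨g1, h1'⟩ ⟨g2, h2'⟩ ⟨g3, h3'⟩ wp wq wr c1 c2
    replace wp : 𝓖.t g1 = 𝓗.s h1' := wp
    replace wq : 𝓖.t g2 = 𝓗.s h2' := wq
    replace wr : 𝓖.t g3 = 𝓗.s h3' := wr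
    replace c1 : 𝓗.t h1' = 𝓖.s g2 := c1
    replace c2 : 𝓗.t h2' = 𝓖.s g3 := c2
    have a1 : 𝓖.s (lact h1' g2) = 𝓗.s h1' := h1 _ _ c1
    have a2 : 𝓖.t (lact h1' g2) = 𝓗.s (ract h1' g2) := h7 _ _ c1
    have a3 : 𝓗.t (ract h1' g2) = 𝓖.t g2 := h4 _ _ c1
    have a4 : 𝓖.s (lact h2' g3) = 𝓗.s h2' := h1 _ _ c2
    have a5 : 𝓖.t (lact h2' g3) = 𝓗.s (ract h2' g3) := h7 _ _ c2
    have a6 : 𝓗.t (ract h2' g3) = 𝓖.t g3 := h4 _ _ c2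
    have b1 : 𝓗.t (ract h1' g2) = 𝓗.s h2' := a3.trans wq
    have b2 : 𝓖.t g2 = 𝓖.s (lact h2' g3) := wq.trans a4.symm
    have b3 : 𝓗.t (ract h1' g2) = 𝓖.s (lact h2' g3) := a3.trans b2
    show (𝓖.comp (𝓖.comp g1 (lact h1' g2)) (lact (𝓗.comp (ract h1' g2) h2') g3),
          𝓗.comp (ract (𝓗.comp (ract h1' g2) h2') g3) h3') =
         (𝓖.comp g1 (lact h1' (𝓖.comp g2 (lact h2' g3))),
          𝓗.comp (ract h1' (𝓖.comp g2 (lact h2' g3))) (𝓗.comp (ract h2' g3) h3'))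
    have fst_eq : 𝓖.comp (𝓖.comp g1 (lact h1' g2)) (lact (𝓗.comp (ract h1' g2) h2') g3)
        = 𝓖.comp g1 (lact h1' (𝓖.comp g2 (lact h2' g3))) := by
      rw [h2 _ _ _ b1 c2, h8 _ _ _ c1 b2]
      refine 𝓖.assoc _ _ _ (wp.trans a1.symm) ?_
      rw [h1 _ _ b3]
      exact a2
    have snd_eq : 𝓗.comp (ract (𝓗.comp (ract h1' g2) h2') g3) h3'
        = 𝓗.comp (ract h1' (𝓖.comp g2 (lact h2' g3))) (𝓗.comp (ract h2' g3) h3') := by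
      rw [h9 _ _ _ b1 c2, h5 _ _ _ c1 b2]
      refine 𝓗.assoc _ _ _ ?_ (a6.trans wr)
      rw [h4 _ _ b3]
      exact a5.symm ▸ a5
    rw [fst_eq, snd_eq]
  · -- unit laws
    rintro ⟨g, h⟩ wp
    replace wp : 𝓖.t g = 𝓗.s h := wp
    constructor
    · show (𝓖.comp (𝓖.unit (𝓖.s g)) (lact (𝓗.unit (𝓖.s g)) g),
            𝓗.comp (ract (𝓗.unit (𝓖.s g)) g) h) = (g, h)
      rw [h3 g, 𝓖.unit_comp, L2 g, wp, 𝓗.unit_comp]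
    · show (𝓖.comp g (lact h (𝓖.unit (𝓗.t h))),
            𝓗.comp (ract h (𝓖.unit (𝓗.t h))) (𝓗.unit (𝓗.t h))) = (g, h)
      rw [L3 h, ← wp, 𝓖.comp_unit, h6 h, 𝓗.comp_unit]
  · -- inverses
    rintro ⟨g, h⟩ wp
    replace wp : 𝓖.t g = 𝓗.s h := wp
    have c : 𝓗.t (𝓗.inv h) = 𝓖.s (𝓖.inv g) := by
      rw [𝓗.t_inv, 𝓖.s_inv, wp]
    refine ⟨(lact (𝓗.inv h) (𝓖.inv g), ract (𝓗.inv h) (𝓖.inv g)), ?_, ?_, ?_, ?_, ?_⟩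
    · exact h7 _ _ c
    · show 𝓖.s (lact (𝓗.inv h) (𝓖.inv g)) = 𝓗.t h
      rw [h1 _ _ c, 𝓗.s_inv]
    · show 𝓗.t (ract (𝓗.inv h) (𝓖.inv g)) = 𝓖.s g
      rw [h4 _ _ c, 𝓖.t_inv]
    · show (𝓖.comp (lact (𝓗.inv h) (𝓖.inv g)) (lact (ract (𝓗.inv h) (𝓖.inv g)) g),
            𝓗.comp (ract (ract (𝓗.inv h) (𝓖.inv g)) g) h) =
           (𝓖.unit (𝓗.t h), 𝓗.unit (𝓗.t h))
      have e1 := h8 (𝓗.inv h) (𝓖.inv g) g c (𝓖.t_inv g)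
      rw [𝓖.inv_comp] at e1
      have e2 := h5 (𝓗.inv h) (𝓖.inv g) g c (𝓖.t_inv g)
      rw [𝓖.inv_comp] at e2
      have htg : 𝓖.t g = 𝓗.t (𝓗.inv h) := wp.trans (𝓗.t_inv h).symm
      rw [htg] at e1 e2
      rw [L3 (𝓗.inv h), 𝓗.s_inv] at e1
      rw [h6 (𝓗.inv h)] at e2
      rw [← e1, ← e2, 𝓗.inv_comp]
    · show (𝓖.comp g (lact h (lact (𝓗.inv h) (𝓖.inv g))),
            𝓗.comp (ract h (lact (𝓗.inv h) (𝓖.inv g))) (ract (𝓗.inv h) (𝓖.inv g))) =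
           (𝓖.unit (𝓖.s g), 𝓗.unit (𝓖.s g))
      have hsh : 𝓗.t h = 𝓗.s (𝓗.inv h) := (𝓗.s_inv h).symm
      have e1 := h2 h (𝓗.inv h) (𝓖.inv g) hsh c
      rw [𝓗.comp_inv] at e1
      have e2 := h9 h (𝓗.inv h) (𝓖.inv g) hsh c
      rw [𝓗.comp_inv] at e2
      have hsgi : 𝓗.s h = 𝓖.s (𝓖.inv g) := wp.symm.trans (𝓖.s_inv g).symm
      rw [hsgi] at e1 e2
      rw [h3 (𝓖.inv g)] at e1
      rw [L2 (𝓖.inv g), 𝓖.t_inv] at e2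
      rw [← e1, ← e2, 𝓖.comp_inv]
end
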